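/- arXiv:1506.07974 — 2 statements merged into one kernel-verified Lean document; each statement's English description precedes it below -/
import Mathlib

section
/- If g(t) ~ c·t^{k-1} as t → 0⁺ (with c, k > 0), then G̃(s) ~ c·Γ(k)·s^{-k} as s → ∞, where G̃(s) = ∫₀^∞ e^{-st} g(t) dt. (Watson's lemma / Tauberian asymptotics.) -/
open MeasureTheory Set Real Filter

open Asymptotics Topology

/-!
Write `g t = c t^(k-1) + h t` with `h = o(t^(k-1))` as `t → 0⁺`. The model term contributes exactly
`c Γ(k) s^(-k)`. For `h`, cut the integral at a small `δ`: on `(0, δ)` the bound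
`|h t| ≤ ε t^(k-1)` contributes at most `ε Γ(k) s^(-k)`, while on `[δ, ∞)` the factor `e^(-st)`
contributes `O(e^(-δ s)) = o(s^(-k))`.
-/

lemma integrableOn_exp_neg_mul_mul_of_le {f : ℝ → ℝ} {a s : ℝ}
    (hf : IntegrableOn (fun t => exp (-a * t) * f t) (Ioi 0)) (has : a ≤ s) :
    IntegrableOn (fun t => exp (-s * t) * f t) (Ioi 0) := by
  have hbound : ∀ᵐ t ∂volume.restrict (Ioi 0), ‖exp (-(s - a) * t)‖ ≤ 1 := by
    refine ae_restrict_of_forall_mem measurableSet_Ioi fun t ht => ?_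
    rw [norm_of_nonneg (exp_pos _).le, exp_le_one_iff]
    nlinarith [mem_Ioi.mp ht]
  refine IntegrableOn.congr_fun (hf.bdd_mul (by fun_prop) hbound) (fun t _ => ?_)
    measurableSet_Ioi
  rw [← mul_assoc, ← exp_add]
  ring_nf

lemma integrableOn_exp_neg_mul_mul_rpow {s k : ℝ} (hs : 0 < s) (hk : 0 < k) :
    IntegrableOn (fun t => exp (-s * t) * t ^ (k - 1)) (Ioi 0) := by
  refine (integrableOn_rpow_mul_exp_neg_mul_rpow (s := k - 1) (by linarith) one_pos hs).congr_fun
    (fun t _ => ?_) measurableSet_Ioi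
  simp only [rpow_one, mul_comm]

lemma integral_exp_neg_mul_mul_rpow {s k : ℝ} (hs : 0 < s) (hk : 0 < k) :
    ∫ t in Ioi 0, exp (-s * t) * t ^ (k - 1) = Gamma k / s ^ k := by
  have := integral_rpow_mul_exp_neg_mul_Ioi hk hs
  simp only [one_div, inv_rpow hs.le, neg_mul] at this ⊢
  rw [← div_eq_inv_mul] at this
  simpa only [mul_comm] using this

lemma norm_rpow_mul_setIntegral_exp_neg_mul_mul_le {f : ℝ → ℝ} {S : Set ℝ} {k s ε : ℝ}
    (hS : MeasurableSet S) (hS0 : S ⊆ Ioi 0) (hk : 0 < k) (hs : 0 < s) (hε : 0 ≤ ε)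
    (hf : ∀ t ∈ S, ‖f t‖ ≤ ε * t ^ (k - 1)) :
    ‖s ^ k * ∫ t in S, exp (-s * t) * f t‖ ≤ ε * Gamma k := by
  have hint : IntegrableOn (fun t => ε * (exp (-s * t) * t ^ (k - 1))) (Ioi 0) :=
    (integrableOn_exp_neg_mul_mul_rpow hs hk).const_mul ε
  have hnorm : ∀ t ∈ S, ‖exp (-s * t) * f t‖ ≤ ε * (exp (-s * t) * t ^ (k - 1)) := by
    intro t ht
    rw [norm_mul, norm_of_nonneg (exp_pos _).le, mul_left_comm]
    exact mul_le_mul_of_nonneg_left (hf t ht) (exp_pos _).le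
  have hnonneg : 0 ≤ᵐ[volume.restrict (Ioi 0)] fun t => ε * (exp (-s * t) * t ^ (k - 1)) :=
    ae_restrict_of_forall_mem measurableSet_Ioi fun t ht => by
      have : 0 ≤ t ^ (k - 1) := rpow_nonneg (le_of_lt ht) _
      positivity
  have hsk : 0 < s ^ k := rpow_pos_of_pos hs k
  have hlocal : ‖∫ t in S, exp (-s * t) * f t‖ ≤ ε * (Gamma k / s ^ k) :=
    calc ‖∫ t in S, exp (-s * t) * f t‖
        ≤ ∫ t in S, ε * (exp (-s * t) * t ^ (k - 1)) :=
          norm_integral_le_of_norm_le (hint.mono_set hS0) (ae_restrict_of_forall_mem hS hnorm)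
      _ ≤ ∫ t in Ioi 0, ε * (exp (-s * t) * t ^ (k - 1)) :=
          setIntegral_mono_set hint hnonneg hS0.eventuallyLE
      _ = ε * (Gamma k / s ^ k) := by
          rw [integral_const_mul, integral_exp_neg_mul_mul_rpow hs hk]
  rw [norm_mul, norm_of_nonneg hsk.le]
  calc s ^ k * ‖∫ t in S, exp (-s * t) * f t‖ ≤ s ^ k * (ε * (Gamma k / s ^ k)) := by gcongr
    _ = ε * Gamma k := by field_simp

lemma norm_exp_neg_mul_mul_le {a s δ t y : ℝ} (has : a ≤ s) (ht : δ ≤ t) :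
    ‖exp (-s * t) * y‖ ≤ exp (-(s - a) * δ) * ‖exp (-a * t) * y‖ := by
  have hsplit : exp (-s * t) = exp (-(s - a) * t) * exp (-a * t) := by
    rw [← exp_add]; ring_nf
  rw [hsplit, mul_assoc, norm_mul, norm_of_nonneg (exp_pos _).le]
  exact mul_le_mul_of_nonneg_right (exp_le_exp.2 (by nlinarith)) (norm_nonneg _)

lemma tendsto_rpow_mul_setIntegral_Ici_exp_neg_mul_mul {f : ℝ → ℝ} {a δ : ℝ} (k : ℝ)
    (hδ : 0 < δ) (hf : IntegrableOn (fun t => exp (-a * t) * f t) (Ici δ)) :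
    Tendsto (fun s => s ^ k * ∫ t in Ici δ, exp (-s * t) * f t) atTop (𝓝 0) := by
  set C := ∫ t in Ici δ, ‖exp (-a * t) * f t‖
  have hlim : Tendsto (fun s => s ^ k * exp (-δ * s) * (exp (a * δ) * C)) atTop (𝓝 0) := by
    simpa using (tendsto_rpow_mul_exp_neg_mul_atTop_nhds_zero k δ hδ).mul_const (exp (a * δ) * C)
  refine squeeze_zero_norm' ?_ hlim
  filter_upwards [eventually_ge_atTop (max a 0)] with s hs
  have has : a ≤ s := le_of_max_le_left hs
  have hs0 : 0 ≤ s := le_of_max_le_right hs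
  have hbound : ‖∫ t in Ici δ, exp (-s * t) * f t‖ ≤ exp (-(s - a) * δ) * C := by
    rw [← integral_const_mul]
    exact norm_integral_le_of_norm_le (hf.norm.const_mul _)
      (ae_restrict_of_forall_mem measurableSet_Ici fun t ht => norm_exp_neg_mul_mul_le has ht)
  have hexp : exp (-(s - a) * δ) = exp (-δ * s) * exp (a * δ) := by
    rw [← exp_add]; ring_nf
  rw [norm_mul, norm_of_nonneg (rpow_nonneg hs0 k), mul_assoc, ← mul_assoc (exp _), ← hexp]
  gcongr

theorem tendsto_rpow_mul_laplace_of_isLittleO {f : ℝ → ℝ} {a k : ℝ} (hk : 0 < k)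
    (hf : IntegrableOn (fun t => exp (-a * t) * f t) (Ioi 0))
    (ho : f =o[𝓝[>] 0] fun t => t ^ (k - 1)) :
    Tendsto (fun s => s ^ k * ∫ t in Ioi 0, exp (-s * t) * f t) atTop (𝓝 0) := by
  rw [Metric.tendsto_nhds]
  intro ε hε
  have hη : 0 < ε / (2 * Gamma k) := by have := Gamma_pos_of_pos hk; positivity
  obtain ⟨δ, hδ, hsmall⟩ : ∃ δ > 0, ∀ t ∈ Ioo 0 δ, ‖f t‖ ≤ ε / (2 * Gamma k) * t ^ (k - 1) := by
    obtain ⟨δ, hδ, hsub⟩ := mem_nhdsGT_iff_exists_Ioo_subset.1 (ho.def hη)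
    refine ⟨δ, hδ, fun t ht => ?_⟩
    simpa only [mem_ofPred_eq, norm_of_nonneg (rpow_nonneg ht.1.le _)] using hsub ht
  have htail := (tendsto_rpow_mul_setIntegral_Ici_exp_neg_mul_mul k hδ
    (hf.mono_set (Ici_subset_Ioi.2 hδ))).eventually (Metric.ball_mem_nhds 0 (half_pos hε))
  filter_upwards [htail, eventually_gt_atTop (max a 0)] with s htail hs
  have hs0 : 0 < s := lt_of_le_of_lt (le_max_right a 0) hs
  have hint := integrableOn_exp_neg_mul_mul_of_le hf (le_max_left a 0 |>.trans hs.le)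
  have hsplit : ∫ t in Ioi 0, exp (-s * t) * f t
      = (∫ t in Ioo 0 δ, exp (-s * t) * f t) + ∫ t in Ici δ, exp (-s * t) * f t := by
    rw [← Ioo_union_Ici_eq_Ioi hδ]
    exact setIntegral_union ((Iio_disjoint_Ici le_rfl).mono_left Ioo_subset_Iio_self)
      measurableSet_Ici (hint.mono_set Ioo_subset_Ioi_self) (hint.mono_set (Ici_subset_Ioi.2 hδ))
  have hlocal := norm_rpow_mul_setIntegral_exp_neg_mul_mul_le measurableSet_Ioo
    Ioo_subset_Ioi_self hk hs0 hη.le hsmall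
  rw [dist_zero_right] at htail ⊢
  rw [hsplit, mul_add]
  calc _ ≤ _ := norm_add_le _ _
    _ < ε / (2 * Gamma k) * Gamma k + ε / 2 := add_lt_add_of_le_of_lt hlocal htail
    _ = ε := by field_simp [(Gamma_pos_of_pos hk).ne']; ring

theorem laplace_transform_large_s_asymptotics_general (g : ℝ → ℝ) (c k : ℝ)
    (hk : 0 < k)
    (hg : IntegrableOn g (Ioi 0))
    (hasym : Tendsto (fun t => g t / (c * t ^ (k - 1))) (nhdsWithin 0 (Ioi 0)) (nhds 1)) :
    Tendsto (fun s : ℝ => s ^ k * ∫ t in Ioi (0:ℝ), Real.exp (-s * t) * g t)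
      atTop (nhds (c * Real.Gamma k)) := by
  have ho : (fun t => g t - c * t ^ (k - 1)) =o[𝓝[>] 0] fun t => t ^ (k - 1) :=
    (isEquivalent_of_tendsto_one hasym).isLittleO.trans_isBigO (isBigO_const_mul_self c _ _)
  have hg' : ∀ s, 0 ≤ s → IntegrableOn (fun t => exp (-s * t) * g t) (Ioi 0) :=
    fun s hs => integrableOn_exp_neg_mul_mul_of_le (a := 0) (by simpa using hg) hs
  have hpow : ∀ s, 0 < s → IntegrableOn (fun t => c * (exp (-s * t) * t ^ (k - 1))) (Ioi 0) :=
    fun s hs => (integrableOn_exp_neg_mul_mul_rpow hs hk).const_mul c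
  have hint : IntegrableOn (fun t => exp (-1 * t) * (g t - c * t ^ (k - 1))) (Ioi 0) :=
    ((hg' 1 zero_le_one).sub (hpow 1 one_pos)).congr_fun
      (fun t _ => by simp only [Pi.sub_apply]; ring) measurableSet_Ioi
  have hdecomp : ∀ᶠ s in atTop,
      c * Gamma k + s ^ k * ∫ t in Ioi 0, exp (-s * t) * (g t - c * t ^ (k - 1))
        = s ^ k * ∫ t in Ioi 0, exp (-s * t) * g t := by
    filter_upwards [eventually_gt_atTop 0] with s hs
    have hsplit : (fun t => exp (-s * t) * (g t - c * t ^ (k - 1)))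
        = fun t => exp (-s * t) * g t - c * (exp (-s * t) * t ^ (k - 1)) := by
      ext t; ring
    rw [hsplit, integral_sub (hg' s hs.le) (hpow s hs), integral_const_mul,
      integral_exp_neg_mul_mul_rpow hs hk]
    field_simp [(rpow_pos_of_pos hs k).ne']
    ring
  simpa using
    ((tendsto_rpow_mul_laplace_of_isLittleO hk hint ho).const_add (c * Gamma k)).congr' hdecomp

theorem laplace_transform_large_s_asymptotics (g : ℝ → ℝ) (c k : ℝ)
    (hc : 0 < c) (hk : 0 < k)
    (hnn : ∀ t ∈ Ioi (0:ℝ), 0 ≤ g t)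
    (hg : IntegrableOn g (Ioi 0))
    (hasym : Tendsto (fun t => g t / (c * t ^ (k - 1))) (nhdsWithin 0 (Ioi 0)) (nhds 1)) :
    Tendsto (fun s : ℝ => s ^ k * ∫ t in Ioi (0:ℝ), Real.exp (-s * t) * g t)
      atTop (nhds (c * Real.Gamma k)) :=
  laplace_transform_large_s_asymptotics_general g c k hk hg hasym
end

section
/- If g(t) ~ c·t^{k-1} as t → 0⁺, then the expected Waxman edge length satisfies h(s) = ∫ t g(t)e^{-st}dt / ∫ g(t)e^{-st}dt ~ k/s as s → ∞. -/
open MeasureTheory Set Real Filter Topology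

/-!
Watson's lemma: if `f t / t ^ (κ - 1) → c` as `t → 0⁺` and `f t * exp (-s₀ * t)` is integrable,
then `s ^ κ * ∫ f t * exp (-s * t) → c * Γ(κ)`. Away from `0` the integrand is exponentially small
in `s`; near `0` the substitution `t = u / s` and dominated convergence, with majorant
`C * exp (-u) * u ^ (κ - 1)`, give `c * ∫ exp (-u) * u ^ (κ - 1) = c * Γ(κ)`.
Applied to `g` (exponent `k`) and to `t * g t` (exponent `k + 1`), the numerator and denominator
of `h` behave like `c Γ(k + 1) s^(-k-1)` and `c Γ(k) s^(-k)`, and `Γ(k + 1) = k Γ(k)`.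
-/

section Watson

variable {f : ℝ → ℝ} {κ c : ℝ}

theorem exp_neg_mul_eq_mul_exp_neg_mul (s₀ s t : ℝ) :
    exp (-s * t) = exp (-s₀ * t) * exp (-(s - s₀) * t) := by
  rw [← exp_add]; ring_nf

theorem integrableOn_mul_exp_neg_mul_of_le {s₀ s : ℝ} (hs : s₀ ≤ s)
    (hf : IntegrableOn (fun t => f t * exp (-s₀ * t)) (Ioi 0)) :
    IntegrableOn (fun t => f t * exp (-s * t)) (Ioi 0) := by
  simp_rw [exp_neg_mul_eq_mul_exp_neg_mul s₀ s, ← mul_assoc]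
  refine hf.mul_bdd (by fun_prop) (c := 1) ?_
  filter_upwards [ae_restrict_mem measurableSet_Ioi] with t ht
  rw [norm_of_nonneg (exp_pos _).le, exp_le_one_iff]
  nlinarith [mem_Ioi.mp ht]

theorem exists_abs_le_mul_rpow_of_tendsto_div
    (hlim : Tendsto (fun t => f t / t ^ (κ - 1)) (𝓝[>] 0) (𝓝 c)) :
    ∃ δ > 0, ∀ t ∈ Ioo (0:ℝ) δ, |f t| ≤ (|c| + 1) * t ^ (κ - 1) := by
  obtain ⟨δ, hδ, hlt⟩ := (nhdsGT_basis (0:ℝ)).eventually_iff.mp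
    (hlim.abs.eventually_lt_const (lt_add_one |c|))
  refine ⟨δ, hδ, fun t ht => ?_⟩
  have hpos : 0 < t ^ (κ - 1) := rpow_pos_of_pos ht.1 _
  have := hlt ht
  rw [abs_div, abs_of_pos hpos, div_lt_iff₀ hpos] at this
  exact this.le

theorem rpow_mul_integral_exp_neg_mul_eq (f : ℝ → ℝ) (κ : ℝ) {s : ℝ} (hs : 0 < s) :
    s ^ κ * ∫ t in Ioi (0:ℝ), f t * exp (-s * t) =
      ∫ u in Ioi (0:ℝ), s ^ (κ - 1) * (f (u / s) * exp (-u)) := by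
  have hcv := integral_comp_mul_left_Ioi (fun u => f (u / s) * exp (-u)) 0 hs
  simp only [mul_zero, smul_eq_mul, mul_div_cancel_left₀ _ hs.ne', ← neg_mul] at hcv
  rw [integral_const_mul, hcv, ← mul_assoc, ← rpow_neg_one, ← rpow_add hs, ← sub_eq_add_neg]

theorem tendsto_rpow_mul_integral_Ici_exp_neg_mul (κ : ℝ) {s₀ δ : ℝ} (hδ : 0 < δ)
    (hf : IntegrableOn (fun t => f t * exp (-s₀ * t)) (Ici δ)) :
    Tendsto (fun s => s ^ κ * ∫ t in Ici δ, f t * exp (-s * t)) atTop (𝓝 0) := by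
  set M := ∫ t in Ici δ, ‖f t * exp (-s₀ * t)‖
  have hdecay := (tendsto_rpow_mul_exp_neg_mul_atTop_nhds_zero κ δ hδ).const_mul (M * exp (s₀ * δ))
  rw [mul_zero] at hdecay
  refine squeeze_zero_norm' ?_ hdecay
  filter_upwards [eventually_ge_atTop s₀, eventually_gt_atTop 0] with s hs₀ hs
  have hint : ‖∫ t in Ici δ, f t * exp (-s * t)‖ ≤ M * exp (-(s - s₀) * δ) := by
    rw [← integral_mul_const]
    refine norm_integral_le_of_norm_le (hf.norm.mul_const _) ?_
    filter_upwards [ae_restrict_mem measurableSet_Ici] with t ht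
    rw [exp_neg_mul_eq_mul_exp_neg_mul s₀ s, ← mul_assoc, norm_mul, norm_of_nonneg (exp_pos _).le]
    exact mul_le_mul_of_nonneg_left (exp_le_exp.mpr (by nlinarith [mem_Ici.mp ht])) (norm_nonneg _)
  calc ‖s ^ κ * ∫ t in Ici δ, f t * exp (-s * t)‖
      ≤ s ^ κ * (M * exp (-(s - s₀) * δ)) := by
        rw [norm_mul, norm_of_nonneg (rpow_pos_of_pos hs κ).le]
        gcongr
    _ = M * exp (s₀ * δ) * (s ^ κ * exp (-δ * s)) := by
        rw [show -(s - s₀) * δ = s₀ * δ + -δ * s by ring, exp_add]; ring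

theorem tendsto_rpow_mul_integral_exp_neg_mul_of_abs_le (hκ : 0 < κ) {C : ℝ}
    (hf : AEStronglyMeasurable f volume) (hbound : ∀ t > 0, |f t| ≤ C * t ^ (κ - 1))
    (hlim : Tendsto (fun t => f t / t ^ (κ - 1)) (𝓝[>] 0) (𝓝 c)) :
    Tendsto (fun s => s ^ κ * ∫ t in Ioi (0:ℝ), f t * exp (-s * t)) atTop (𝓝 (c * Gamma κ)) := by
  have hscale : ∀ s > 0, ∀ u > 0, s ^ (κ - 1) * (f (u / s) * exp (-u)) =
      f (u / s) / (u / s) ^ (κ - 1) * (exp (-u) * u ^ (κ - 1)) := by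
    intro s hs u hu
    have := rpow_pos_of_pos hu (κ - 1)
    have := rpow_pos_of_pos hs (κ - 1)
    rw [div_rpow hu.le hs.le]
    field_simp
  have hGamma : c * Gamma κ = ∫ u in Ioi (0:ℝ), c * (exp (-u) * u ^ (κ - 1)) := by
    rw [Gamma_eq_integral hκ, integral_const_mul]
  rw [hGamma]
  refine (tendsto_integral_filter_of_dominated_convergence
    (F := fun s u => s ^ (κ - 1) * (f (u / s) * exp (-u))) (fun u => C * (exp (-u) * u ^ (κ - 1)))
    ?meas ?bound ((GammaIntegral_convergent hκ).const_mul C) ?lim).congr' ?eq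
  case eq =>
    filter_upwards [eventually_gt_atTop 0] with s hs
    exact (rpow_mul_integral_exp_neg_mul_eq f κ hs).symm
  case meas =>
    filter_upwards [eventually_gt_atTop 0] with s hs
    have hdiv : Measure.QuasiMeasurePreserving (fun u : ℝ => u / s) volume volume := by
      simpa only [smul_eq_mul, div_eq_inv_mul] using
        Measure.quasiMeasurePreserving_smul (μ := (volume : Measure ℝ)) (inv_ne_zero hs.ne')
    exact (((hf.comp_quasiMeasurePreserving hdiv).mul (by fun_prop)).const_mul _).restrict
  case bound =>
    filter_upwards [eventually_gt_atTop 0] with s hs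
    filter_upwards [ae_restrict_mem measurableSet_Ioi] with u (hu : 0 < u)
    have hpos : 0 < (u / s) ^ (κ - 1) := rpow_pos_of_pos (div_pos hu hs) _
    rw [hscale s hs u hu, norm_mul, norm_of_nonneg (by positivity : 0 ≤ exp (-u) * u ^ (κ - 1))]
    gcongr
    rw [norm_div, norm_of_nonneg hpos.le, Real.norm_eq_abs, div_le_iff₀ hpos]
    exact hbound _ (div_pos hu hs)
  case lim =>
    filter_upwards [ae_restrict_mem measurableSet_Ioi] with u (hu : 0 < u)
    have hdiv : Tendsto (fun s => u / s) atTop (𝓝[>] 0) :=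
      tendsto_nhdsWithin_iff.mpr ⟨tendsto_const_nhds.div_atTop tendsto_id,
        (eventually_gt_atTop 0).mono fun s hs => div_pos hu hs⟩
    refine ((hlim.comp hdiv).mul_const (exp (-u) * u ^ (κ - 1))).congr' ?_
    filter_upwards [eventually_gt_atTop 0] with s hs
    exact (hscale s hs u hu).symm

theorem integral_Ioi_eq_integral_indicator_Ioo_add_integral_Ici {h : ℝ → ℝ} {a δ : ℝ}
    (hδ : a < δ) (hh : IntegrableOn h (Ioi a)) :
    ∫ t in Ioi a, h t = (∫ t in Ioi a, (Ioo a δ).indicator h t) + ∫ t in Ici δ, h t := by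
  rw [setIntegral_indicator measurableSet_Ioo, inter_eq_right.mpr Ioo_subset_Ioi_self,
    ← Ioo_union_Ici_eq_Ioi hδ]
  exact setIntegral_union ((Iio_disjoint_Ici le_rfl).mono_left Ioo_subset_Iio_self)
    measurableSet_Ici (hh.mono_set Ioo_subset_Ioi_self) (hh.mono_set (Ici_subset_Ioi.mpr hδ))

theorem tendsto_rpow_mul_integral_exp_neg_mul (hκ : 0 < κ) {s₀ : ℝ}
    (hf : IntegrableOn (fun t => f t * exp (-s₀ * t)) (Ioi 0))
    (hlim : Tendsto (fun t => f t / t ^ (κ - 1)) (𝓝[>] 0) (𝓝 c)) :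
    Tendsto (fun s => s ^ κ * ∫ t in Ioi (0:ℝ), f t * exp (-s * t)) atTop (𝓝 (c * Gamma κ)) := by
  obtain ⟨δ, hδ, hbound⟩ := exists_abs_le_mul_rpow_of_tendsto_div hlim
  set f₀ := (Ioo 0 δ).indicator f
  have hf_meas : AEStronglyMeasurable f (volume.restrict (Ioi 0)) := by
    have hf_eq : (fun t => f t * exp (-s₀ * t) * exp (s₀ * t)) = f := by
      ext t; rw [mul_assoc, ← exp_add, neg_mul, neg_add_cancel, exp_zero, mul_one]
    exact hf_eq ▸ hf.aestronglyMeasurable.mul (by fun_prop)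
  have hmain : Tendsto (fun s => s ^ κ * ∫ t in Ioi (0:ℝ), f₀ t * exp (-s * t)) atTop
      (𝓝 (c * Gamma κ)) := by
    refine tendsto_rpow_mul_integral_exp_neg_mul_of_abs_le hκ (C := |c| + 1)
      ((aestronglyMeasurable_indicator_iff measurableSet_Ioo).mpr
        (hf_meas.mono_measure (Measure.restrict_mono Ioo_subset_Ioi_self le_rfl)))
      (fun t ht => ?_) (hlim.congr' ?_)
    · by_cases hmem : t ∈ Ioo 0 δ
      · simpa [f₀, hmem] using hbound t hmem
      · simp only [f₀, indicator_of_notMem hmem, abs_zero]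
        exact mul_nonneg (by positivity) (rpow_pos_of_pos ht _).le
    · filter_upwards [Ioo_mem_nhdsGT hδ] with t ht
      simp [f₀, ht]
  have htail := tendsto_rpow_mul_integral_Ici_exp_neg_mul κ hδ
    (hf.mono_set (Ici_subset_Ioi.mpr hδ))
  have hsum := hmain.add htail
  rw [add_zero] at hsum
  refine hsum.congr' ?_
  filter_upwards [eventually_ge_atTop s₀] with s hs
  rw [integral_Ioi_eq_integral_indicator_Ioo_add_integral_Ici hδ
    (integrableOn_mul_exp_neg_mul_of_le hs hf), mul_add]
  simp_rw [f₀, indicator_mul_left]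

end Watson

theorem IntegrableOn.mul_self_mul_exp_neg {g : ℝ → ℝ} (hg : IntegrableOn g (Ioi 0)) :
    IntegrableOn (fun t => t * g t * exp (-t)) (Ioi 0) := by
  have h : IntegrableOn (fun t => t * exp (-t) * g t) (Ioi 0) := by
    refine hg.bdd_mul (c := 1) (by fun_prop) ?_
    filter_upwards [ae_restrict_mem measurableSet_Ioi] with t (ht : 0 < t)
    rw [norm_of_nonneg (by positivity), exp_neg, mul_inv_le_iff₀ (exp_pos t), one_mul]
    linarith [add_one_le_exp t]
  exact h.congr_fun (fun t _ => by ring) measurableSet_Ioi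

theorem waxman_mean_length_asymptotics_general (g : ℝ → ℝ) (c k : ℝ)
    (hc : 0 < c) (hk : 0 < k)
    (hone : ∫ t in Ioi (0:ℝ), g t = 1)
    (hasym : Tendsto (fun t => g t / (c * t ^ (k - 1))) (nhdsWithin 0 (Ioi 0)) (nhds 1)) :
    Tendsto (fun s : ℝ => s * ((∫ t in Ioi (0:ℝ), t * g t * Real.exp (-s * t)) /
        (∫ t in Ioi (0:ℝ), g t * Real.exp (-s * t)))) atTop (nhds k) := by
  have hg_int : IntegrableOn g (Ioi 0) := Integrable.of_integral_ne_zero (hone ▸ one_ne_zero)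
  have hg_lim : Tendsto (fun t => g t / t ^ (k - 1)) (𝓝[>] 0) (𝓝 c) := by
    refine (mul_one c ▸ hasym.const_mul c).congr' ?_
    filter_upwards [self_mem_nhdsWithin] with t (ht : 0 < t)
    rw [← mul_div_assoc, mul_div_mul_left _ _ hc.ne']
  have hA := tendsto_rpow_mul_integral_exp_neg_mul hk (s₀ := 0) (by simpa using hg_int) hg_lim
  have hB := tendsto_rpow_mul_integral_exp_neg_mul (f := fun t => t * g t) (add_pos hk one_pos)
    (s₀ := 1) (by simpa using IntegrableOn.mul_self_mul_exp_neg hg_int) <| hg_lim.congr' <| by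
      filter_upwards [self_mem_nhdsWithin] with t (ht : 0 < t)
      rw [add_sub_cancel_right, ← sub_add_cancel k 1, rpow_add_one ht.ne', sub_add_cancel,
        mul_comm t, mul_div_mul_right _ _ ht.ne']
  have hratio : c * Gamma (k + 1) / (c * Gamma k) = k := by
    rw [Gamma_add_one hk.ne', mul_left_comm, mul_div_cancel_right₀ _ (by positivity)]
  rw [← hratio]
  refine (hB.div hA (by positivity)).congr' ?_
  filter_upwards [eventually_gt_atTop 0] with s hs
  rw [Pi.div_apply, rpow_add_one hs.ne', mul_assoc,
    mul_div_mul_left _ _ (rpow_pos_of_pos hs k).ne', mul_div_assoc]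

theorem waxman_mean_length_asymptotics (g : ℝ → ℝ) (c k : ℝ)
    (hc : 0 < c) (hk : 0 < k)
    (hnn : ∀ t ∈ Ioi (0:ℝ), 0 ≤ g t)
    (hone : ∫ t in Ioi (0:ℝ), g t = 1)
    (hasym : Tendsto (fun t => g t / (c * t ^ (k - 1))) (nhdsWithin 0 (Ioi 0)) (nhds 1)) :
    Tendsto (fun s : ℝ => s * ((∫ t in Ioi (0:ℝ), t * g t * Real.exp (-s * t)) /
        (∫ t in Ioi (0:ℝ), g t * Real.exp (-s * t)))) atTop (nhds k) :=
  waxman_mean_length_asymptotics_general g c k hc hk hone hasym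
end
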